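/- Let X be a compact connected metric space, let μ be a faithful Borel probability measure on X, and let (μ_k) be a sequence of faithful Borel probability measures on X. Then ∫ f dμ_k → ∫ f dμ for every continuous function f : X → ℝ if and only if W_∞(μ_k, μ) → 0. -/

import Mathlib

open MeasureTheory Filter

/-- The ∞-Wasserstein distance between two Borel measures on a metric space:
`W_∞(μ, ν) = inf { r > 0 : μ(U) ≤ ν(U_r) and ν(U) ≤ μ(U_r) for every open U }`,
where `U_r` is the open `r`-neighbourhood of `U`. -/
noncomputable def infWasserstein {X : Type*} [MetricSpace X] [MeasurableSpace X]
    (μ ν : Measure X) : ℝ :=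
  sInf { r : ℝ | 0 < r ∧ ∀ U : Set X, IsOpen U →
    μ U ≤ ν (Metric.thickening r U) ∧ ν U ≤ μ (Metric.thickening r U) }

/-!
If `W_∞(μₖ, μ) < r`, then `μₖ(F) ≤ μ(F_{2r})` for every closed `F`; since `μ(F_r) → μ(F)` as
`r → 0`, this is the limsup form of the portmanteau theorem.

Conversely, fix `ε > 0` and a finite `ε/2`-net. Every set `U` lies in the union `V` of the net
balls meeting it, and `V ⊆ U_{ε/2}`; there are only finitely many such `V`. When `V_{ε/2} ≠ X`,
connectedness makes `V_{ε/2} \ closure V` a nonempty open set, so faithfulness of `μ` gives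
`μ(closure V) < μ(V_{ε/2})`. The portmanteau inequalities for closed and open sets then give
`μₖ(V) ≤ μ(V_{ε/2})` and `μ(V) ≤ μₖ(V_{ε/2})` for all large `k`, uniformly over the finitely
many `V`, whence `W_∞(μₖ, μ) ≤ ε`.
-/

open Metric Set Topology

section Radii

variable {X : Type*} [MetricSpace X] [MeasurableSpace X]

def wassersteinRadii (μ ν : Measure X) : Set ℝ :=
  { r : ℝ | 0 < r ∧ ∀ U : Set X, IsOpen U →
    μ U ≤ ν (thickening r U) ∧ ν U ≤ μ (thickening r U) }

theorem infWasserstein_nonneg (μ ν : Measure X) : 0 ≤ infWasserstein μ ν :=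
  Real.sInf_nonneg fun _ hr => hr.1.le

theorem infWasserstein_le_of_mem {μ ν : Measure X} {r : ℝ} (hr : r ∈ wassersteinRadii μ ν) :
    infWasserstein μ ν ≤ r :=
  csInf_le ⟨0, fun _ hs => hs.1.le⟩ hr

theorem wassersteinRadii_mono {μ ν : Measure X} {r s : ℝ} (hr : r ∈ wassersteinRadii μ ν)
    (hrs : r ≤ s) : s ∈ wassersteinRadii μ ν :=
  ⟨hr.1.trans_le hrs, fun U hU =>
    ⟨(hr.2 U hU).1.trans (measure_mono (thickening_mono hrs U)),
      (hr.2 U hU).2.trans (measure_mono (thickening_mono hrs U))⟩⟩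

theorem wassersteinRadii_nonempty [BoundedSpace X] (μ ν : Measure X)
    [IsProbabilityMeasure μ] [IsProbabilityMeasure ν] : (wassersteinRadii μ ν).Nonempty := by
  refine ⟨diam (univ : Set X) + 1, by linarith [diam_nonneg (s := (univ : Set X))], fun U _ => ?_⟩
  rcases U.eq_empty_or_nonempty with rfl | ⟨u, hu⟩
  · simp
  have hthick : thickening (diam (univ : Set X) + 1) U = univ :=
    eq_univ_of_forall fun x => mem_thickening_iff.2 ⟨u, hu,
      (dist_le_diam_of_mem (Bornology.isBounded_univ.2 ‹_›) (mem_univ x) (mem_univ u)).trans_lt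
        (lt_add_one _)⟩
  simp [hthick, prob_le_one]

theorem mem_wassersteinRadii_of_infWasserstein_lt [BoundedSpace X] {μ ν : Measure X}
    [IsProbabilityMeasure μ] [IsProbabilityMeasure ν] {r : ℝ} (h : infWasserstein μ ν < r) :
    r ∈ wassersteinRadii μ ν :=
  let ⟨_, hs, hsr⟩ := exists_lt_of_csInf_lt (wassersteinRadii_nonempty μ ν) h
  wassersteinRadii_mono hs hsr.le

end Radii

theorem ProbabilityMeasure.tendsto_iff_forall_continuous_integral_tendsto {X ι : Type*}
    [TopologicalSpace X] [CompactSpace X] [MeasurableSpace X] [OpensMeasurableSpace X]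
    {L : Filter ι} {μs : ι → ProbabilityMeasure X} {μ : ProbabilityMeasure X} :
    Tendsto μs L (𝓝 μ) ↔ ∀ f : X → ℝ, Continuous f →
      Tendsto (fun i => ∫ x, f x ∂(μs i : Measure X)) L (𝓝 (∫ x, f x ∂(μ : Measure X))) := by
  rw [ProbabilityMeasure.tendsto_iff_forall_integral_tendsto]
  exact ⟨fun h f hf => h (BoundedContinuousFunction.mkOfCompact ⟨f, hf⟩),
    fun h f => h f f.continuous⟩

theorem tendsto_of_tendsto_infWasserstein {X ι : Type*} [MetricSpace X]
    [BoundedSpace X] [MeasurableSpace X] [OpensMeasurableSpace X] {L : Filter ι}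
    [L.IsCountablyGenerated] {μs : ι → ProbabilityMeasure X} {μ : ProbabilityMeasure X}
    (h : Tendsto (fun i => infWasserstein (μs i : Measure X) μ) L (𝓝 0)) :
    Tendsto μs L (𝓝 μ) := by
  refine tendsto_of_forall_isClosed_limsup_le' fun F hF => ?_
  have hthick : ∀ r > 0,
      L.limsup (fun i => (μs i : Measure X) F) ≤ (μ : Measure X) (thickening r F) := by
    intro r hr
    refine limsup_le_of_le (by isBoundedDefault) ?_
    filter_upwards [h.eventually (gt_mem_nhds (half_pos hr))] with i hi
    calc (μs i : Measure X) F ≤ (μs i : Measure X) (thickening (r / 2) F) :=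
          measure_mono (self_subset_thickening (half_pos hr) F)
      _ ≤ (μ : Measure X) (thickening (r / 2) (thickening (r / 2) F)) :=
          ((mem_wassersteinRadii_of_infWasserstein_lt hi).2 _ isOpen_thickening).1
      _ ≤ (μ : Measure X) (thickening r F) :=
          measure_mono ((thickening_thickening_subset _ _ F).trans_eq (by rw [add_halves]))
  exact ge_of_tendsto
    (tendsto_measure_thickening_of_isClosed ⟨1, one_pos, measure_ne_top _ _⟩ hF)
    (eventually_nhdsWithin_of_forall hthick)

section Connected

variable {X : Type*} [MetricSpace X] [PreconnectedSpace X]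

theorem nonempty_thickening_diff_closure {s : Set X} (hs : s.Nonempty) {r : ℝ} (hr : 0 < r)
    (hne : thickening r s ≠ univ) : (thickening r s \ closure s).Nonempty := by
  by_contra hempty
  have heq : thickening r s = closure s :=
    (sdiff_eq_empty.1 (not_nonempty_iff_eq_empty.1 hempty)).antisymm
      (closure_subset_thickening hr s)
  have hclopen : IsClopen (thickening r s) := ⟨heq ▸ isClosed_closure, isOpen_thickening⟩
  rcases isClopen_iff.1 hclopen with hempty' | huniv
  · exact (hs.mono (self_subset_thickening hr s)).ne_empty hempty'
  · exact hne huniv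

variable [MeasurableSpace X] [OpensMeasurableSpace X]

theorem measure_closure_lt_measure_thickening (μ : Measure X) [IsFiniteMeasure μ]
    [μ.IsOpenPosMeasure] {s : Set X} (hs : s.Nonempty) {r : ℝ} (hr : 0 < r)
    (hne : thickening r s ≠ univ) : μ (closure s) < μ (thickening r s) := by
  have hshell : 0 < μ (thickening r s \ closure s) :=
    (isOpen_thickening.sdiff isClosed_closure).measure_pos μ
      (nonempty_thickening_diff_closure hs hr hne)
  calc μ (closure s) < μ (closure s) + μ (thickening r s \ closure s) :=
        ENNReal.lt_add_right (measure_ne_top μ _) hshell.ne'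
    _ = μ (thickening r s) := by
        rw [measure_add_sdiff isClosed_closure.nullMeasurableSet,
          union_eq_self_of_subset_left (closure_subset_thickening hr s)]

theorem eventually_measure_le_measure_thickening {ι : Type*} {L : Filter ι}
    {μs : ι → ProbabilityMeasure X} {μ : ProbabilityMeasure X}
    [(μ : Measure X).IsOpenPosMeasure] (h : Tendsto μs L (𝓝 μ)) (s : Set X) {r : ℝ}
    (hr : 0 < r) :
    ∀ᶠ i in L, (μs i : Measure X) s ≤ (μ : Measure X) (thickening r s) ∧
      (μ : Measure X) s ≤ (μs i : Measure X) (thickening r s) := by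
  rcases s.eq_empty_or_nonempty with rfl | hs
  · simp
  by_cases hne : thickening r s = univ
  · simp [hne, prob_le_one]
  have hlt := measure_closure_lt_measure_thickening (μ : Measure X) hs hr hne
  have hclosure : ∀ᶠ i in L, (μs i : Measure X) (closure s) < (μ : Measure X) (thickening r s) :=
    eventually_lt_of_limsup_lt
      ((ProbabilityMeasure.limsup_measure_closed_le_of_tendsto h isClosed_closure).trans_lt hlt)
  have hthick : ∀ᶠ i in L, (μ : Measure X) (closure s) < (μs i : Measure X) (thickening r s) :=
    eventually_lt_of_lt_liminf (hlt.trans_le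
      (ProbabilityMeasure.le_liminf_measure_open_of_tendsto h isOpen_thickening))
  filter_upwards [hclosure, hthick] with i hi hi'
  exact ⟨(measure_mono subset_closure).trans hi.le, (measure_mono subset_closure).trans hi'.le⟩

end Connected

theorem exists_finite_family_subset_thickening {X : Type*} [MetricSpace X]
    (hX : TotallyBounded (univ : Set X)) {ε : ℝ} (hε : 0 < ε) :
    ∃ 𝒱 : Set (Set X), 𝒱.Finite ∧ ∀ U : Set X, ∃ V ∈ 𝒱, U ⊆ V ∧ V ⊆ thickening ε U := by
  obtain ⟨t, ht, hcover⟩ := Metric.totallyBounded_iff.1 hX (ε / 2) (half_pos hε)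
  refine ⟨(fun S => ⋃ y ∈ S, ball y (ε / 2)) '' 𝒫 t, (ht.powerset).image _, fun U => ?_⟩
  -- `U` is covered by the net balls that meet it, and these stay within `ε` of `U`.
  refine ⟨_, mem_image_of_mem _ (sep_subset t fun y => (ball y (ε / 2) ∩ U).Nonempty),
    fun x hx => ?_, fun w hw => ?_⟩
  · obtain ⟨y, hyt, hxy⟩ := mem_iUnion₂.1 (hcover (mem_univ x))
    exact mem_biUnion ⟨hyt, x, hxy, hx⟩ hxy
  · obtain ⟨y, ⟨-, u, huy, hu⟩, hwy⟩ := mem_iUnion₂.1 hw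
    exact mem_thickening_iff.2 ⟨u, hu, (dist_triangle_right w u y).trans_lt
      (by linarith [mem_ball.1 hwy, mem_ball.1 huy])⟩

theorem tendsto_infWasserstein_of_tendsto {X ι : Type*} [MetricSpace X]
    [CompactSpace X] [PreconnectedSpace X] [MeasurableSpace X] [OpensMeasurableSpace X]
    {L : Filter ι} {μs : ι → ProbabilityMeasure X} {μ : ProbabilityMeasure X}
    [(μ : Measure X).IsOpenPosMeasure] (h : Tendsto μs L (𝓝 μ)) :
    Tendsto (fun i => infWasserstein (μs i : Measure X) μ) L (𝓝 0) := by
  have hmem : ∀ ε > 0, ∀ᶠ i in L, ε ∈ wassersteinRadii (μs i : Measure X) μ := by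
    intro ε hε
    obtain ⟨𝒱, h𝒱, hU⟩ := exists_finite_family_subset_thickening
      (isCompact_univ : IsCompact (univ : Set X)).totallyBounded (half_pos hε)
    filter_upwards [(eventually_all_finite h𝒱).2 fun V _ =>
      eventually_measure_le_measure_thickening h V (half_pos hε)] with i hi
    refine ⟨hε, fun U _ => ?_⟩
    obtain ⟨V, hV, hUV, hVU⟩ := hU U
    have hthick : thickening (ε / 2) V ⊆ thickening ε U :=
      (thickening_subset_of_subset _ hVU).trans
        ((thickening_thickening_subset _ _ U).trans_eq (by rw [add_halves]))
    exact ⟨(measure_mono hUV).trans ((hi V hV).1.trans (measure_mono hthick)),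
      (measure_mono hUV).trans ((hi V hV).2.trans (measure_mono hthick))⟩
  refine tendsto_order.2 ⟨fun a ha => Eventually.of_forall fun i =>
    ha.trans_le (infWasserstein_nonneg _ _), fun a ha => ?_⟩
  filter_upwards [hmem (a / 2) (half_pos ha)] with i hi
  exact (infWasserstein_le_of_mem hi).trans_lt (half_lt_self ha)

theorem weakstar_tendsto_iff_infWasserstein_tendsto_general
    (X : Type*) [MetricSpace X] [CompactSpace X] [ConnectedSpace X]
    [MeasurableSpace X] [BorelSpace X]
    (μ : Measure X) [IsProbabilityMeasure μ]
    (hμfaithful : ∀ U : Set X, IsOpen U → U.Nonempty → 0 < μ U)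
    (μs : ℕ → Measure X) (hprob : ∀ k, IsProbabilityMeasure (μs k)) :
    (∀ f : X → ℝ, Continuous f →
        Tendsto (fun k => ∫ x, f x ∂(μs k)) atTop (nhds (∫ x, f x ∂μ))) ↔
      Tendsto (fun k => infWasserstein (μs k) μ) atTop (nhds 0) := by
  let P : ℕ → ProbabilityMeasure X := fun k => ⟨μs k, hprob k⟩
  let Pμ : ProbabilityMeasure X := ⟨μ, inferInstance⟩
  have : (Pμ : Measure X).IsOpenPosMeasure := ⟨fun U hU hne => (hμfaithful U hU hne).ne'⟩
  have hweak : Tendsto P atTop (𝓝 Pμ) ↔ ∀ f : X → ℝ, Continuous f →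
      Tendsto (fun k => ∫ x, f x ∂(μs k)) atTop (𝓝 (∫ x, f x ∂μ)) :=
    ProbabilityMeasure.tendsto_iff_forall_continuous_integral_tendsto
  have hW : Tendsto (fun k => infWasserstein (μs k) μ) atTop (𝓝 0) ↔
      Tendsto (fun k => infWasserstein (P k : Measure X) Pμ) atTop (𝓝 0) := Iff.rfl
  rw [← hweak, hW]
  exact ⟨tendsto_infWasserstein_of_tendsto, tendsto_of_tendsto_infWasserstein⟩

/-- On a compact connected metric space, `W_∞` metrises the weak-* topology on the
faithful Borel probability measures: a sequence of faithful probability measures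
converges weak-* to a faithful probability measure `μ` iff it converges in `W_∞`. -/
theorem weakstar_tendsto_iff_infWasserstein_tendsto
    (X : Type*) [MetricSpace X] [CompactSpace X] [ConnectedSpace X]
    [MeasurableSpace X] [BorelSpace X]
    (μ : Measure X) [IsProbabilityMeasure μ]
    (hμfaithful : ∀ U : Set X, IsOpen U → U.Nonempty → 0 < μ U)
    (μs : ℕ → Measure X) (hprob : ∀ k, IsProbabilityMeasure (μs k))
    (hfaithful : ∀ k, ∀ U : Set X, IsOpen U → U.Nonempty → 0 < (μs k) U) :
    (∀ f : X → ℝ, Continuous f →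
        Tendsto (fun k => ∫ x, f x ∂(μs k)) atTop (nhds (∫ x, f x ∂μ))) ↔
      Tendsto (fun k => infWasserstein (μs k) μ) atTop (nhds 0) :=
  weakstar_tendsto_iff_infWasserstein_tendsto_general X μ hμfaithful μs hprob
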